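/- arXiv:1602.00407 — 3 statements merged into one kernel-verified Lean document; each statement's English description precedes it below -/
import Mathlib

section
/- The poset of noncrossing partitions of {1,...,n} ordered by refinement is a bounded lattice. -/
open Finset

def Finpartition.IsNoncrossing {n : ℕ} (P : Finpartition (univ : Finset (Fin n))) : Prop :=
  ∀ a b c d : Fin n, a < b → b < c → c < d →
    (∃ B ∈ P.parts, a ∈ B ∧ c ∈ B) → (∃ B ∈ P.parts, b ∈ B ∧ d ∈ B) →
    ∃ B ∈ P.parts, a ∈ B ∧ b ∈ B ∧ c ∈ B ∧ d ∈ B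

/-- Noncrossing partitions of `{1,…,n}`. -/
def NC (n : ℕ) : Type := {P : Finpartition (univ : Finset (Fin n)) // P.IsNoncrossing}

/-- The refinement order: `τ ≤ σ` iff every block of `σ` is contained in a block of `τ`. -/
def NC.le {n : ℕ} (τ σ : NC n) : Prop :=
  ∀ B ∈ σ.1.parts, ∃ C ∈ τ.1.parts, B ⊆ C

lemma NC.le_iff {n : ℕ} (τ σ : NC n) : NC.le τ σ ↔ σ.1 ≤ τ.1 := Iff.rfl

lemma top_isNoncrossing {n : ℕ} : (⊤ : Finpartition (univ : Finset (Fin n))).IsNoncrossing := by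
  rintro a b c d _ _ _ ⟨B, hB, ha, -⟩ ⟨B', hB', hb, -⟩
  have h1 := Finpartition.parts_top_subset _ hB
  have h2 := Finpartition.parts_top_subset _ hB'
  rw [Finset.mem_singleton] at h1 h2
  exact ⟨B, hB, by simp [h1], by simp [h1], by simp [h1], by simp [h1]⟩

lemma bot_isNoncrossing {n : ℕ} : (⊥ : Finpartition (univ : Finset (Fin n))).IsNoncrossing := by
  rintro a b c d hab hbc _ ⟨B, hB, ha, hc⟩ -
  rw [Finpartition.mem_bot_iff] at hB
  obtain ⟨x, -, rfl⟩ := hB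
  rw [Finset.mem_singleton] at ha hc
  exact absurd (hab.trans hbc) (by simp [ha.trans hc.symm])

lemma inf_isNoncrossing {n : ℕ} {P Q : Finpartition (univ : Finset (Fin n))}
    (hP : P.IsNoncrossing) (hQ : Q.IsNoncrossing) : (P ⊓ Q).IsNoncrossing := by
  rintro a b c d hab hbc hcd ⟨B, hB, ha, hc⟩ ⟨B', hB', hb, hd⟩
  obtain ⟨C, hC, hBC⟩ := (inf_le_left : P ⊓ Q ≤ P) hB
  obtain ⟨C', hC', hBC'⟩ := (inf_le_left : P ⊓ Q ≤ P) hB'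
  obtain ⟨D, hD, hBD⟩ := (inf_le_right : P ⊓ Q ≤ Q) hB
  obtain ⟨D', hD', hBD'⟩ := (inf_le_right : P ⊓ Q ≤ Q) hB'
  obtain ⟨E, hE, haE, hbE, hcE, hdE⟩ :=
    hP a b c d hab hbc hcd ⟨C, hC, hBC ha, hBC hc⟩ ⟨C', hC', hBC' hb, hBC' hd⟩
  obtain ⟨F, hF, haF, hbF, hcF, hdF⟩ :=
    hQ a b c d hab hbc hcd ⟨D, hD, hBD ha, hBD hc⟩ ⟨D', hD', hBD' hb, hBD' hd⟩
  refine ⟨E ⊓ F, ?_, ?_, ?_, ?_, ?_⟩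
  · rw [Finpartition.parts_inf]
    refine Finset.mem_erase_of_ne_of_mem ?_ ?_
    · intro h
      have : a ∈ (⊥ : Finset (Fin n)) := h ▸ Finset.mem_inter.2 ⟨haE, haF⟩
      simp at this
    · exact Finset.mem_image.2 ⟨(E, F), Finset.mem_product.2 ⟨hE, hF⟩, rfl⟩
  all_goals exact Finset.mem_inter.2 ⟨by assumption, by assumption⟩

set_option maxHeartbeats 1000000 in
/-- The poset of noncrossing partitions of `{1,…,n}` ordered by refinement is a bounded
lattice: it has a least and a greatest element, and any two elements have a least upper
bound and a greatest lower bound with respect to the refinement order. -/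
theorem noncrossing_partitions_bounded_lattice (n : ℕ) :
    ∃ bot top : NC n,
      (∀ x : NC n, NC.le bot x ∧ NC.le x top) ∧
      (∀ x y : NC n,
        (∃ s : NC n, NC.le x s ∧ NC.le y s ∧
          ∀ z : NC n, NC.le x z → NC.le y z → NC.le s z) ∧
        (∃ m : NC n, NC.le m x ∧ NC.le m y ∧
          ∀ z : NC n, NC.le z x → NC.le z y → NC.le z m)) := by
  classical
  refine ⟨⟨⊤, top_isNoncrossing⟩, ⟨⊥, bot_isNoncrossing⟩, fun x => ⟨(NC.le_iff _ _).mpr le_top, (NC.le_iff _ _).mpr bot_le⟩, fun x y => ?_⟩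
  constructor
  · exact ⟨⟨x.1 ⊓ y.1, inf_isNoncrossing x.2 y.2⟩, (NC.le_iff _ _).mpr inf_le_left,
      (NC.le_iff _ _).mpr inf_le_right, fun z hx hy => (NC.le_iff _ _).mpr
        (le_inf ((NC.le_iff _ _).mp hx) ((NC.le_iff _ _).mp hy))⟩
  · set T : Finset (Finpartition (univ : Finset (Fin n))) :=
      Finset.univ.filter (fun P => P.IsNoncrossing ∧ x.1 ≤ P ∧ y.1 ≤ P) with hT
    have htop : (⊤ : Finpartition (univ : Finset (Fin n))) ∈ T := by
      simp [hT, top_isNoncrossing, le_top]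
    have hne : T.Nonempty := ⟨⊤, htop⟩
    have hmem : ∀ P ∈ T, P.IsNoncrossing ∧ x.1 ≤ P ∧ y.1 ≤ P := by
      intro P hP; simpa [hT] using hP
    refine ⟨⟨T.inf' hne id, ?_⟩, ?_, ?_, ?_⟩
    · exact Finset.inf'_induction hne id (fun a ha b hb => inf_isNoncrossing ha hb)
        (fun P hP => (hmem P hP).1)
    · exact (NC.le_iff _ _).mpr (Finset.le_inf' hne id (fun P hP => (hmem P hP).2.1))
    · exact (NC.le_iff _ _).mpr (Finset.le_inf' hne id (fun P hP => (hmem P hP).2.2))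
    · intro z hzx hzy
      refine (NC.le_iff _ _).mpr (Finset.inf'_le id ?_)
      simp only [hT, Finset.mem_filter, Finset.mem_univ, true_and]
      exact ⟨z.2, (NC.le_iff _ _).mp hzx, (NC.le_iff _ _).mp hzy⟩
end

section
/- For an assignment U : {intervals of [1,n-1]} → {∅, {p}} define a relation ~ on {1,...,n} by a ~ b+1 iff U([a,b]) = ∅ (for a ≤ b), together with reflexivity. If U satisfies: for all x₁ < x₂ < x₃ in {1,...,n}, each of U([x₁,x₂-1]), U([x₂,x₃-1]), U([x₁,x₃-1]) is contained in the union of the other two, then ~ is transitive, hence an equivalence relation. -/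
/-- The relation on `{1,…,n}` determined by an assignment `U` of sets to intervals:
`a ~ a` always, and for `a < b`, `a ~ b` iff `U([a, b-1]) = ∅` (extended symmetrically). -/
def relU {α : Type*} (U : ℕ → ℕ → Set α) (a b : ℕ) : Prop :=
  a = b ∨ (a < b ∧ U a (b - 1) = ∅) ∨ (b < a ∧ U b (a - 1) = ∅)

/-- If `U` assigns to each interval either `∅` or `{p}`, and for all `x₁ < x₂ < x₃` in
`{1,…,n}` each of `U([x₁,x₂-1])`, `U([x₂,x₃-1])`, `U([x₁,x₃-1])` is contained in the
union of the other two, then the relation `~` is transitive (hence an equivalence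
relation, being reflexive and symmetric by definition). -/
theorem relU_transitive {α : Type*} (p : α) (n : ℕ) (U : ℕ → ℕ → Set α)
    (hval : ∀ a b, U a b = ∅ ∨ U a b = {p})
    (hex : ∀ x₁ x₂ x₃, 1 ≤ x₁ → x₁ < x₂ → x₂ < x₃ → x₃ ≤ n →
      U x₁ (x₂ - 1) ⊆ U x₂ (x₃ - 1) ∪ U x₁ (x₃ - 1) ∧
      U x₂ (x₃ - 1) ⊆ U x₁ (x₂ - 1) ∪ U x₁ (x₃ - 1) ∧
      U x₁ (x₃ - 1) ⊆ U x₁ (x₂ - 1) ∪ U x₂ (x₃ - 1)) :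
    ∀ a b c, 1 ≤ a → a ≤ n → 1 ≤ b → b ≤ n → 1 ≤ c → c ≤ n →
      relU U a b → relU U b c → relU U a c := by
  have key : ∀ x₁ x₂ x₃, 1 ≤ x₁ → x₁ < x₂ → x₂ < x₃ → x₃ ≤ n →
      (U x₁ (x₂-1) = ∅ → U x₂ (x₃-1) = ∅ → U x₁ (x₃-1) = ∅) ∧
      (U x₁ (x₂-1) = ∅ → U x₁ (x₃-1) = ∅ → U x₂ (x₃-1) = ∅) ∧
      (U x₂ (x₃-1) = ∅ → U x₁ (x₃-1) = ∅ → U x₁ (x₂-1) = ∅) := by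
    intro x₁ x₂ x₃ h1 h12 h23 h3n
    obtain ⟨A, B, C⟩ := hex x₁ x₂ x₃ h1 h12 h23 h3n
    refine ⟨fun e1 e2 => ?_, fun e1 e2 => ?_, fun e1 e2 => ?_⟩
    · rw [e1, e2] at C
      simpa [Set.subset_empty_iff] using C
    · rw [e1, e2] at B
      simpa [Set.subset_empty_iff] using B
    · rw [e1, e2] at A
      simpa [Set.subset_empty_iff] using A
  intro a b c ha han hb hbn hc hcn hab hbc
  rcases hab with rfl | ⟨hlt1, he1⟩ | ⟨hlt1, he1⟩
  · exact hbc
  all_goals rcases hbc with rfl | ⟨hlt2, he2⟩ | ⟨hlt2, he2⟩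
  · exact Or.inr (Or.inl ⟨hlt1, he1⟩)
  · -- a < b < c
    exact Or.inr (Or.inl ⟨hlt1.trans hlt2, (key a b c ha hlt1 hlt2 hcn).1 he1 he2⟩)
  · -- a < b, c < b
    rcases lt_trichotomy a c with h | rfl | h
    · -- a < c < b : know U a (b-1), U c (b-1); want U a (c-1)
      exact Or.inr (Or.inl ⟨h, (key a c b ha h hlt2 hbn).2.2 he2 he1⟩)
    · exact Or.inl rfl
    · -- c < a < b : know U c (b-1), U a (b-1); want U c (a-1)
      exact Or.inr (Or.inr ⟨h, (key c a b hc h hlt1 hbn).2.2 he1 he2⟩)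
  · exact Or.inr (Or.inr ⟨hlt1, he1⟩)
  · -- b < a, b < c
    rcases lt_trichotomy a c with h | rfl | h
    · -- b < a < c : know U b (a-1), U b (c-1); want U a (c-1)
      exact Or.inr (Or.inl ⟨h, (key b a c hb hlt1 h hcn).2.1 he1 he2⟩)
    · exact Or.inl rfl
    · -- b < c < a : know U b (a-1), U b (c-1); want U c (a-1)
      exact Or.inr (Or.inr ⟨h, (key b c a hb hlt2 h han).2.1 he2 he1⟩)
  · -- c < b < a
    exact Or.inr (Or.inr ⟨hlt2.trans hlt1, (key c b a hc hlt2 hlt1 han).1 he2 he1⟩)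
end

section
/- Continuing the previous setup, if additionally for all 1 ≤ a < b < c < d ≤ n one has U([a,d-1]) ∪ U([b,c-1]) ⊆ U([a,c-1]) ∪ U([b,d-1]), then the equivalence relation ~ defines a noncrossing partition of {1,...,n}: whenever a < b < c < d with a ~ c and b ~ d, all of a, b, c, d are equivalent. -/
/-- Under the three-term exactness condition (making `~` an equivalence relation) and the
additional crossing condition `U([a,d-1]) ∪ U([b,c-1]) ⊆ U([a,c-1]) ∪ U([b,d-1])` for all
`1 ≤ a < b < c < d ≤ n`, the equivalence relation `~` defines a noncrossing partition of
`{1,…,n}`: whenever `a < b < c < d` with `a ~ c` and `b ~ d`, all of `a, b, c, d` are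
equivalent. -/
theorem relU_noncrossing {α : Type*} (p : α) (n : ℕ) (U : ℕ → ℕ → Set α)
    (hval : ∀ a b, U a b = ∅ ∨ U a b = {p})
    (hex : ∀ x₁ x₂ x₃, 1 ≤ x₁ → x₁ < x₂ → x₂ < x₃ → x₃ ≤ n →
      U x₁ (x₂ - 1) ⊆ U x₂ (x₃ - 1) ∪ U x₁ (x₃ - 1) ∧
      U x₂ (x₃ - 1) ⊆ U x₁ (x₂ - 1) ∪ U x₁ (x₃ - 1) ∧
      U x₁ (x₃ - 1) ⊆ U x₁ (x₂ - 1) ∪ U x₂ (x₃ - 1))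
    (hcross : ∀ a b c d, 1 ≤ a → a < b → b < c → c < d → d ≤ n →
      U a (d - 1) ∪ U b (c - 1) ⊆ U a (c - 1) ∪ U b (d - 1)) :
    ∀ a b c d, 1 ≤ a → a < b → b < c → c < d → d ≤ n →
      relU U a c → relU U b d →
      relU U a b ∧ relU U b c ∧ relU U c d := by
  intro a b c d ha hab hbc hcd hdn hac hbd
  have hac' : U a (c - 1) = ∅ := by
    rcases hac with h | ⟨_, h⟩ | ⟨h, _⟩
    · omega
    · exact h
    · omega
  have hbd' : U b (d - 1) = ∅ := by
    rcases hbd with h | ⟨_, h⟩ | ⟨h, _⟩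
    · omega
    · exact h
    · omega
  have hbc' : U b (c - 1) = ∅ := by
    have h := hcross a b c d ha hab hbc hcd hdn
    rw [hac', hbd'] at h
    have h2 : U b (c - 1) ⊆ (∅ : Set α) := by
      intro x hx
      simpa using h (Or.inr hx)
    simpa [Set.subset_empty_iff] using h2
  have hab' : U a (b - 1) = ∅ := by
    have h := (hex a b c ha hab hbc (by omega)).1
    rw [hbc', hac'] at h
    simpa [Set.subset_empty_iff] using h
  have hcd' : U c (d - 1) = ∅ := by
    have h := (hex b c d (by omega) hbc hcd hdn).2.1
    rw [hbc', hbd'] at h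
    simpa [Set.subset_empty_iff] using h
  exact ⟨Or.inr (Or.inl ⟨hab, hab'⟩), Or.inr (Or.inl ⟨hbc, hbc'⟩), Or.inr (Or.inl ⟨hcd, hcd'⟩)⟩
end
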